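/- arXiv:2212.09716 — 2 statements merged into one kernel-verified Lean document; each statement's English description precedes it below -/
import Mathlib

section
/- The derivative of the evolute satisfies e'(t) = σ(t)·b(t), where σ = rτ + (r'/τ)'; in particular the tangent line of the evolute at a regular point is parallel to the binormal of ξ. Consequently, (R²)'(t) = 2·(r'(t)/τ(t))·σ(t), so at every point where σ vanishes (a cusp of the evolute) the derivative of R² vanishes. -/
open scoped RealInnerProductSpace

open scoped ContDiff

noncomputable section

/-- The determinant of the 3×3 matrix with rows `u`, `v`, `w`. -/
def det3 (u v w : EuclideanSpace ℝ (Fin 3)) : ℝ :=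
  u 0 * (v 1 * w 2 - v 2 * w 1) - u 1 * (v 0 * w 2 - v 2 * w 0)
    + u 2 * (v 0 * w 1 - v 1 * w 0)

/-- The cross product of two vectors in `ℝ³`. -/
def cross3 (u v : EuclideanSpace ℝ (Fin 3)) : EuclideanSpace ℝ (Fin 3) :=
  (WithLp.equiv 2 (Fin 3 → ℝ)).symm
    ![u 1 * v 2 - u 2 * v 1, u 2 * v 0 - u 0 * v 2, u 0 * v 1 - u 1 * v 0]

section Helpers

abbrev E3 := EuclideanSpace ℝ (Fin 3)

lemma cross3_zero (u v : E3) : cross3 u v 0 = u 1 * v 2 - u 2 * v 1 := rfl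
lemma cross3_one (u v : E3) : cross3 u v 1 = u 2 * v 0 - u 0 * v 2 := rfl
lemma cross3_two (u v : E3) : cross3 u v 2 = u 0 * v 1 - u 1 * v 0 := rfl

lemma inner3 (u v : E3) : ⟪u, v⟫ = u 0 * v 0 + u 1 * v 1 + u 2 * v 2 := by
  simp [PiLp.inner_apply, Fin.sum_univ_three, RCLike.inner_apply, mul_comm]

lemma e3_ext {u v : E3} (h0 : u 0 = v 0) (h1 : u 1 = v 1) (h2 : u 2 = v 2) : u = v := by
  refine PiLp.ext fun i => ?_; fin_cases i; exacts [h0, h1, h2]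

lemma inner_cross3 (u v w : E3) : ⟪cross3 u v, w⟫ = det3 u v w := by
  simp only [inner3, cross3_zero, cross3_one, cross3_two, det3]; ring

lemma cross3_self (u : E3) : cross3 u u = 0 := by
  apply e3_ext <;> simp [cross3_zero, cross3_one, cross3_two] <;> ring

lemma cross3_smul_right (a : ℝ) (u v : E3) : cross3 u (a • v) = a • cross3 u v := by
  apply e3_ext <;>
    simp only [cross3_zero, cross3_one, cross3_two, PiLp.smul_apply, smul_eq_mul] <;> ring

lemma cross3_add_right (u v w : E3) : cross3 u (v + w) = cross3 u v + cross3 u w := by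
  apply e3_ext <;>
    simp only [cross3_zero, cross3_one, cross3_two, PiLp.add_apply] <;> ring

lemma cross3_triple (a b c : E3) :
    cross3 a (cross3 b c) = ⟪a, c⟫ • b - ⟪a, b⟫ • c := by
  apply e3_ext <;>
    simp only [cross3_zero, cross3_one, cross3_two, inner3, PiLp.sub_apply,
      PiLp.smul_apply, smul_eq_mul] <;> ring

lemma lagrange3 (u v : E3) :
    ⟪cross3 u v, cross3 u v⟫ = ⟪u, u⟫ * ⟪v, v⟫ - ⟪u, v⟫ ^ 2 := by
  simp only [inner3, cross3_zero, cross3_one, cross3_two]; ring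

lemma inner_self_cross3 (u v : E3) : ⟪v, cross3 u v⟫ = 0 := by
  simp only [inner3, cross3_zero, cross3_one, cross3_two]; ring

lemma expansion3 (u v w : E3) (h1 : ⟪u, u⟫ = 1) (h2 : ⟪v, v⟫ = 1) (h3 : ⟪u, v⟫ = 0) :
    w = ⟪w, u⟫ • u + ⟪w, v⟫ • v + ⟪w, cross3 u v⟫ • cross3 u v := by
  simp only [inner3, cross3_zero, cross3_one, cross3_two] at h1 h2 h3 ⊢
  apply e3_ext <;>
    simp only [cross3_zero, cross3_one, cross3_two, inner3, PiLp.add_apply,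
      PiLp.smul_apply, smul_eq_mul]
  · linear_combination
      ((w 0*v 0+w 1*v 1+w 2*v 2) * v 0 - w 0 * (v 0*v 0+v 1*v 1+v 2*v 2)) * h1 +
      ((w 0*u 0+w 1*u 1+w 2*u 2) * u 0 - w 0) * h2 +
      (-(u 0*w 0+u 1*w 1+u 2*w 2) * v 0 - (v 0*w 0+v 1*w 1+v 2*w 2) * u 0
        + w 0 * (u 0*v 0+u 1*v 1+u 2*v 2)) * h3
  · linear_combination
      ((w 0*v 0+w 1*v 1+w 2*v 2) * v 1 - w 1 * (v 0*v 0+v 1*v 1+v 2*v 2)) * h1 +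
      ((w 0*u 0+w 1*u 1+w 2*u 2) * u 1 - w 1) * h2 +
      (-(u 0*w 0+u 1*w 1+u 2*w 2) * v 1 - (v 0*w 0+v 1*w 1+v 2*w 2) * u 1
        + w 1 * (u 0*v 0+u 1*v 1+u 2*v 2)) * h3
  · linear_combination
      ((w 0*v 0+w 1*v 1+w 2*v 2) * v 2 - w 2 * (v 0*v 0+v 1*v 1+v 2*v 2)) * h1 +
      ((w 0*u 0+w 1*u 1+w 2*u 2) * u 2 - w 2) * h2 +
      (-(u 0*w 0+u 1*w 1+u 2*w 2) * v 2 - (v 0*w 0+v 1*w 1+v 2*w 2) * u 2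
        + w 2 * (u 0*v 0+u 1*v 1+u 2*v 2)) * h3

lemma hasDerivAt_proj {f : ℝ → E3} {f' : E3} {t : ℝ} (hf : HasDerivAt f f' t) (i : Fin 3) :
    HasDerivAt (fun s => f s i) (f' i) t := by
  have := ((EuclideanSpace.proj i (𝕜 := ℝ)).hasFDerivAt (x := f t)).comp_hasDerivAt t hf
  exact this

lemma hasDerivAt_e3 {φ : ℝ → Fin 3 → ℝ} {φ' : Fin 3 → ℝ} {t : ℝ} (h : HasDerivAt φ φ' t) :
    HasDerivAt (fun s => (WithLp.equiv 2 (Fin 3 → ℝ)).symm (φ s))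
      ((WithLp.equiv 2 (Fin 3 → ℝ)).symm φ') t :=
  ((PiLp.continuousLinearEquiv 2 ℝ
    (fun _ : Fin 3 => ℝ)).symm.toContinuousLinearMap.hasFDerivAt).comp_hasDerivAt t h

lemma hasDerivAt_cross {f g : ℝ → E3} {f' g' : E3} {t : ℝ}
    (hf : HasDerivAt f f' t) (hg : HasDerivAt g g' t) :
    HasDerivAt (fun s => cross3 (f s) (g s)) (cross3 f' (g t) + cross3 (f t) g') t := by
  have h0 := hasDerivAt_proj hf 0
  have h1 := hasDerivAt_proj hf 1
  have h2 := hasDerivAt_proj hf 2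
  have k0 := hasDerivAt_proj hg 0
  have k1 := hasDerivAt_proj hg 1
  have k2 := hasDerivAt_proj hg 2
  have hφ : HasDerivAt
      (fun s => ![f s 1 * g s 2 - f s 2 * g s 1, f s 2 * g s 0 - f s 0 * g s 2,
        f s 0 * g s 1 - f s 1 * g s 0])
      ![f' 1 * g t 2 + f t 1 * g' 2 - (f' 2 * g t 1 + f t 2 * g' 1),
        f' 2 * g t 0 + f t 2 * g' 0 - (f' 0 * g t 2 + f t 0 * g' 2),
        f' 0 * g t 1 + f t 0 * g' 1 - (f' 1 * g t 0 + f t 1 * g' 0)] t := by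
    refine hasDerivAt_pi.2 fun i => ?_
    fin_cases i
    · exact (h1.mul k2).sub (h2.mul k1)
    · exact (h2.mul k0).sub (h0.mul k2)
    · exact (h0.mul k1).sub (h1.mul k0)
  have := hasDerivAt_e3 hφ
  convert this using 1
  · rfl
  apply e3_ext <;>
    · simp [cross3_zero, cross3_one, cross3_two, PiLp.add_apply,
        WithLp.equiv_symm_apply, PiLp.toLp_apply]
      ring

end Helpers

theorem stmt_3
    (ξ : ℝ → EuclideanSpace ℝ (Fin 3))
    (hξ : ContDiff ℝ (⊤ : ℕ∞) ξ)
    (hunit : ∀ t, ‖deriv ξ t‖ = 1)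
    (k τ r : ℝ → ℝ) (N B : ℝ → EuclideanSpace ℝ (Fin 3))
    (hk : ∀ t, k t = ‖deriv (deriv ξ) t‖)
    (hkpos : ∀ t, 0 < k t)
    (hN : ∀ t, N t = (k t)⁻¹ • deriv (deriv ξ) t)
    (hB : ∀ t, B t = cross3 (deriv ξ t) (N t))
    (hτ : ∀ t, τ t = det3 (deriv ξ t) (deriv (deriv ξ) t) (deriv (deriv (deriv ξ)) t) / (k t) ^ 2)
    (hτne : ∀ t, τ t ≠ 0)
    (hr : ∀ t, r t = (k t)⁻¹)
    (e : ℝ → EuclideanSpace ℝ (Fin 3))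
    (he : ∀ t, e t = ξ t + r t • N t + (deriv r t / τ t) • B t)
    (R : ℝ → ℝ) (hR : ∀ t, R t = ‖e t - ξ t‖)
    (σ : ℝ → ℝ)
    (hσ : ∀ t, σ t = r t * τ t + deriv (fun s => deriv r s / τ s) t)
 :
    (∀ t, deriv e t = σ t • B t) ∧
    (∀ t, deriv (fun s => R s ^ 2) t = 2 * (deriv r t / τ t) * σ t) ∧
    (∀ t, σ t = 0 → deriv (fun s => R s ^ 2) t = 0) := by
  have hone : (1 : WithTop ℕ∞) ≤ ∞ := by exact_mod_cast le_top
  have hs : ContDiff ℝ ∞ ξ := hξ.of_le (by simp)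
  set D1 := deriv ξ with hD1def
  set D2 := deriv D1 with hD2def
  set D3 := deriv D2 with hD3def
  have hc1 : ContDiff ℝ ∞ D1 := (contDiff_infty_iff_deriv.mp hs).2
  have hc2 : ContDiff ℝ ∞ D2 := (contDiff_infty_iff_deriv.mp hc1).2
  have hc3 : ContDiff ℝ ∞ D3 := (contDiff_infty_iff_deriv.mp hc2).2
  have hdξ : ∀ t, HasDerivAt ξ (D1 t) t := fun t => (hs.differentiable (by simp) t).hasDerivAt
  have hD1 : ∀ t, HasDerivAt D1 (D2 t) t := fun t => (hc1.differentiable (by simp) t).hasDerivAt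
  have hD2 : ∀ t, HasDerivAt D2 (D3 t) t := fun t => (hc2.differentiable (by simp) t).hasDerivAt
  have hD3diff : ∀ t, DifferentiableAt ℝ D3 t := fun t => hc3.differentiable (by simp) t
  have hkne : ∀ t, k t ≠ 0 := fun t => (hkpos t).ne'
  have hτk : ∀ t, det3 (D1 t) (D2 t) (D3 t) = τ t * k t ^ 2 := by
    intro t; rw [hτ t]; exact (div_mul_cancel₀ _ (pow_ne_zero 2 (hkne t))).symm
  -- basic inner product facts
  have hTT : ∀ t, ⟪D1 t, D1 t⟫ = 1 := fun t => by
    rw [real_inner_self_eq_norm_mul_norm, hunit t, mul_one]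
  have hgk : ∀ t, ⟪D2 t, D2 t⟫ = k t ^ 2 := fun t => by
    rw [hk t]; exact real_inner_self_eq_norm_sq _
  have hTD2 : ∀ t, ⟪D1 t, D2 t⟫ = 0 := by
    intro t
    have h1 := (hD1 t).inner ℝ (hD1 t)
    have h2 : (fun s => ⟪D1 s, D1 s⟫) = fun _ => (1 : ℝ) := funext fun s => hTT s
    rw [h2] at h1
    have h3 := h1.unique (hasDerivAt_const t 1)
    have h4 : ⟪D1 t, D2 t⟫ = ⟪D2 t, D1 t⟫ := real_inner_comm _ _
    linarith
  -- derivative of k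
  set kd : ℝ → ℝ := fun s => ⟪D3 s, D2 s⟫ / k s with hkddef
  have hk' : ∀ t, HasDerivAt k (kd t) t := by
    intro t
    have hg := (hD2 t).inner ℝ (hD2 t)
    have hgne : ⟪D2 t, D2 t⟫ ≠ 0 := by rw [hgk t]; exact pow_ne_zero 2 (hkne t)
    have hsq := (Real.hasDerivAt_sqrt hgne).comp t hg
    have hke : k = fun s => Real.sqrt ⟪D2 s, D2 s⟫ :=
      funext fun s => by rw [hk s, norm_eq_sqrt_real_inner]
    have hval : kd t = 1 / (2 * Real.sqrt ⟪D2 t, D2 t⟫) *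
        (⟪D2 t, D3 t⟫ + ⟪D3 t, D2 t⟫) := by
      have hcomm : ⟪D2 t, D3 t⟫ = ⟪D3 t, D2 t⟫ := real_inner_comm _ _
      rw [hgk t, Real.sqrt_sq (hkpos t).le, hkddef, hcomm]
      ring
    rw [hke, hval]
    exact hsq
  -- derivative of r
  set rd : ℝ → ℝ := fun s => -kd s / k s ^ 2 with hrddef
  have hr' : ∀ t, HasDerivAt r (rd t) t := by
    intro t
    have hre : r = fun s => (k s)⁻¹ := funext hr
    rw [hre]
    exact (hk' t).inv (hkne t)
  have hderiv_r : deriv r = rd := funext fun t => (hr' t).deriv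
  -- derivative of N
  have hN' : ∀ t, HasDerivAt N (rd t • D2 t + (k t)⁻¹ • D3 t) t := by
    intro t
    have hNe : N = fun s => (k s)⁻¹ • D2 s := funext hN
    rw [hNe]
    have h := ((hk' t).inv (hkne t)).smul (hD2 t)
    have h2 : rd t • D2 t + (k t)⁻¹ • D3 t
        = (k t)⁻¹ • D3 t + (-kd t / k t ^ 2) • D2 t := by
      rw [hrddef]; exact add_comm _ _
    rw [h2]
    exact h
  -- derivative of B
  have hB' : ∀ t, HasDerivAt B
      (cross3 (D2 t) (N t) + cross3 (D1 t) (rd t • D2 t + (k t)⁻¹ • D3 t)) t := by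
    intro t
    have hBe : B = fun s => cross3 (D1 s) (N s) := funext hB
    rw [hBe]
    exact hasDerivAt_cross (hD1 t) (hN' t)
  -- differentiability of τ and rd
  have hkdiff : ∀ t, DifferentiableAt ℝ k t := fun t => (hk' t).differentiableAt
  have hτdiff : ∀ t, DifferentiableAt ℝ τ t := by
    intro t
    have hτe : τ = fun s => det3 (D1 s) (D2 s) (D3 s) / k s ^ 2 := funext hτ
    rw [hτe]
    have d1 : ∀ i, DifferentiableAt ℝ (fun s => D1 s i) t :=
      fun i => (hasDerivAt_proj (hD1 t) i).differentiableAt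
    have d2 : ∀ i, DifferentiableAt ℝ (fun s => D2 s i) t :=
      fun i => (hasDerivAt_proj (hD2 t) i).differentiableAt
    have d3 : ∀ i, DifferentiableAt ℝ (fun s => D3 s i) t :=
      fun i => (hasDerivAt_proj (hD3diff t).hasDerivAt i).differentiableAt
    refine DifferentiableAt.div ?_ ((hkdiff t).pow 2) (pow_ne_zero 2 (hkne t))
    unfold det3
    exact ((((d1 0).mul (((d2 1).mul (d3 2)).sub ((d2 2).mul (d3 1)))).sub
      ((d1 1).mul (((d2 0).mul (d3 2)).sub ((d2 2).mul (d3 0))))).add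
      ((d1 2).mul (((d2 0).mul (d3 1)).sub ((d2 1).mul (d3 0)))))
  have hrddiff : ∀ t, DifferentiableAt ℝ rd t := by
    intro t
    have hinner : DifferentiableAt ℝ (fun s => ⟪D3 s, D2 s⟫) t :=
      (hD3diff t).inner ℝ (hD2 t).differentiableAt
    rw [hrddef]
    exact ((hinner.div (hkdiff t) (hkne t)).neg).div ((hkdiff t).pow 2)
      (pow_ne_zero 2 (hkne t))
  -- the function q = r'/τ
  set q : ℝ → ℝ := fun s => rd s / τ s with hqdef
  have hqdiff : ∀ t, DifferentiableAt ℝ q t := fun t =>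
    (hrddiff t).div (hτdiff t) (hτne t)
  have hq' : ∀ t, HasDerivAt q (deriv q t) t := fun t => (hqdiff t).hasDerivAt
  have hqe : (fun s => deriv r s / τ s) = q := by
    funext s; rw [hderiv_r]
  -- orthonormality
  have hNN : ∀ t, ⟪N t, N t⟫ = 1 := by
    intro t
    rw [hN t, real_inner_smul_left, real_inner_smul_right, hgk t]
    rw [show (k t)⁻¹ * ((k t)⁻¹ * k t ^ 2) = ((k t)⁻¹ * k t) * ((k t)⁻¹ * k t) by ring,
      inv_mul_cancel₀ (hkne t), one_mul]
  have hTN : ∀ t, ⟪D1 t, N t⟫ = 0 := by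
    intro t; rw [hN t, real_inner_smul_right, hTD2 t, mul_zero]
  have hNB : ∀ t, ⟪N t, B t⟫ = 0 := by
    intro t; rw [hB t]; exact inner_self_cross3 _ _
  have hBB : ∀ t, ⟪B t, B t⟫ = 1 := by
    intro t; rw [hB t, lagrange3, hTT t, hNN t, hTN t]; norm_num
  -- expansion of D3 in the Frenet frame
  have hw3 : ∀ t, D3 t = (-(k t ^ 2)) • D1 t + kd t • N t + (τ t * k t) • B t := by
    intro t
    have hexp := expansion3 (D1 t) (N t) (D3 t) (hTT t) (hNN t) (hTN t)
    rw [← hB t] at hexp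
    have c1 : ⟪D3 t, D1 t⟫ = -(k t ^ 2) := by
      have hconst : (fun s => ⟪D2 s, D1 s⟫) = fun _ => (0 : ℝ) :=
        funext fun s => by rw [real_inner_comm]; exact hTD2 s
      have hd := (hD2 t).inner ℝ (hD1 t)
      rw [hconst] at hd
      have h0 := hd.unique (hasDerivAt_const t 0)
      rw [hgk t] at h0
      linarith
    have c2 : ⟪D3 t, N t⟫ = kd t := by
      rw [hN t, real_inner_smul_right, hkddef]
      field_simp
    have c3 : ⟪D3 t, B t⟫ = τ t * k t := by
      rw [hB t, hN t, cross3_smul_right, real_inner_smul_right,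
        real_inner_comm, inner_cross3, hτk t]
      rw [show (k t)⁻¹ * (τ t * k t ^ 2) = τ t * k t * ((k t)⁻¹ * k t) by ring,
        inv_mul_cancel₀ (hkne t), mul_one]
    rw [c1, c2, c3] at hexp
    exact hexp
  -- cross product identities
  have hUN : ∀ t, cross3 (D1 t) (N t) = B t := fun t => (hB t).symm
  have hUB : ∀ t, cross3 (D1 t) (B t) = -N t := by
    intro t
    rw [hB t, cross3_triple, hTN t, hTT t]
    simp
  have hD2N : ∀ t, D2 t = k t • N t := by
    intro t
    rw [hN t, smul_smul, mul_inv_cancel₀ (hkne t), one_smul]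
  have hUD2 : ∀ t, cross3 (D1 t) (D2 t) = k t • B t := by
    intro t
    rw [hD2N t, cross3_smul_right, hUN t]
  have hUw3 : ∀ t, cross3 (D1 t) (D3 t) = kd t • B t - (τ t * k t) • N t := by
    intro t
    rw [hw3 t, cross3_add_right, cross3_add_right, cross3_smul_right,
      cross3_smul_right, cross3_smul_right, cross3_self, hUN t, hUB t]
    module
  -- the evolute function
  have hee : e = fun s => ξ s + r s • N s + q s • B s := by
    funext s
    rw [he s, hderiv_r]
  -- Part 1
  have part1 : ∀ t, deriv e t = σ t • B t := by
    intro t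
    have hE' : HasDerivAt (fun s => ξ s + r s • N s + q s • B s)
        (D1 t + (r t • (rd t • D2 t + (k t)⁻¹ • D3 t) + rd t • N t)
          + (q t • (cross3 (D2 t) (N t) + cross3 (D1 t) (rd t • D2 t + (k t)⁻¹ • D3 t))
            + deriv q t • B t)) t :=
      ((hdξ t).add ((hr' t).smul (hN' t))).add ((hq' t).smul (hB' t))
    rw [hee, hE'.deriv, hσ t, hqe]
    have h0 : cross3 (D2 t) (N t) = 0 := by
      rw [hN t, cross3_smul_right, cross3_self, smul_zero]
    rw [h0, cross3_add_right, cross3_smul_right, cross3_smul_right, hUD2 t, hUw3 t,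
      hr t, hD2N t, hw3 t]
    have hq_eq : q t = rd t / τ t := by rw [hqdef]
    have hrd_eq : rd t = -kd t / k t ^ 2 := by rw [hrddef]
    have hk0 := hkne t
    have hτ0 := hτne t
    rw [hq_eq, hrd_eq]
    match_scalars <;>
      · field_simp [hq_eq, hrd_eq, hkne t, hτne t]
        try ring
  -- Part 2
  have hRsq : (fun s => R s ^ 2) = fun s => r s ^ 2 + q s ^ 2 := by
    funext s
    rw [hR s, hee]
    have hsub : ξ s + r s • N s + q s • B s - ξ s = r s • N s + q s • B s := by
      abel
    rw [hsub, ← real_inner_self_eq_norm_sq, real_inner_add_add_self,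
      real_inner_smul_left, real_inner_smul_left, real_inner_smul_left,
      real_inner_smul_right, real_inner_smul_right, real_inner_smul_right,
      hNN s, hNB s, hBB s]
    ring
  have part2 : ∀ t, deriv (fun s => R s ^ 2) t = 2 * (deriv r t / τ t) * σ t := by
    intro t
    have hD : HasDerivAt (fun s => r s ^ 2 + q s ^ 2)
        (2 * r t ^ 1 * rd t + 2 * q t ^ 1 * deriv q t) t := by
      exact ((hr' t).pow 2).add ((hq' t).pow 2)
    rw [hRsq, hD.deriv, hσ t, hqe, hderiv_r]
    have hq_eq : q t = rd t / τ t := by rw [hqdef]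
    have hτ0 := hτne t
    rw [hq_eq]
    field_simp
  refine ⟨part1, part2, fun t h => ?_⟩
  rw [part2 t, h, mul_zero]
end
end

section
/- Assume k'(t)τ(t) − k(t)τ'(t) ≠ 0. Then the point ε(t) = ξ(t) + (k/(k'τ − kτ'))·(τ·t + k·b) evaluated at t is the unique point P ∈ ℝ³ satisfying the three equations (P − ξ)·n = 0, (P − ξ)·(−k·t + τ·b) = 0, and k + (P − ξ)·(−k'·t + τ'·b − (k² + τ²)·n) = 0, all evaluated at t; i.e. ε(t) is the point of the pseudo-evolute of ξ, characterized by (ε − ξ)·t = kτ/(k'τ − kτ'), (ε − ξ)·b = k²/(k'τ − kτ'), (ε − ξ)·n = 0. -/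
open scoped RealInnerProductSpace

noncomputable section

/-- Expansion of the inner product in coordinates. -/
lemma inner3_s11 (x y : EuclideanSpace ℝ (Fin 3)) :
    ⟪x, y⟫ = x 0 * y 0 + x 1 * y 1 + x 2 * y 2 := by
  simp [PiLp.inner_apply, Fin.sum_univ_three]; ring

/-- Completeness of an orthonormal pair together with its cross product, coordinate 0. -/
lemma key3 (T0 T1 T2 n0 n1 n2 p0 p1 p2 : ℝ)
    (hTT : T0^2+T1^2+T2^2 = 1) (hnn : n0^2+n1^2+n2^2 = 1) (hTn : T0*n0+T1*n1+T2*n2 = 0) :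
    p0 = (p0*T0+p1*T1+p2*T2)*T0 + (p0*n0+p1*n1+p2*n2)*n0
      + (p0*(T1*n2-T2*n1)+p1*(T2*n0-T0*n2)+p2*(T0*n1-T1*n0))*(T1*n2-T2*n1) := by
  linear_combination ((p0*n0+p1*n1+p2*n2)*n0 - p0*(n0^2+n1^2+n2^2))*hTT
    + ((p0*T0+p1*T1+p2*T2)*T0 - p0)*hnn
    + (-(p0*T0+p1*T1+p2*T2)*n0 - (p0*n0+p1*n1+p2*n2)*T0 + p0*(T0*n0+T1*n1+T2*n2))*hTn

/-- A curve with values on the unit sphere is orthogonal to its derivative. -/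
lemma perp3 (f : ℝ → EuclideanSpace ℝ (Fin 3)) (hd : Differentiable ℝ f)
    (h : ∀ t, ‖f t‖ = 1) (t : ℝ) : ⟪f t, deriv f t⟫ = 0 := by
  have hD : HasDerivAt (fun s => ⟪f s, f s⟫) (⟪f t, deriv f t⟫ + ⟪deriv f t, f t⟫) t :=
    (hd t).hasDerivAt.inner ℝ (hd t).hasDerivAt
  have h0 : HasDerivAt (fun s => ⟪f s, f s⟫) 0 t := by
    have hg : (fun s => ⟪f s, f s⟫) = fun _ => (1:ℝ) := by
      funext s; rw [real_inner_self_eq_norm_sq, h s]; norm_num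
    rw [hg]; exact hasDerivAt_const t 1
  have h2 := hD.unique h0
  rw [real_inner_comm (deriv f t) (f t)] at h2
  rw [real_inner_comm]; linarith

theorem stmt_11
    (ξ : ℝ → EuclideanSpace ℝ (Fin 3))
    (hξ : ContDiff ℝ (⊤ : ℕ∞) ξ)
    (hunit : ∀ t, ‖deriv ξ t‖ = 1)
    (k τ r : ℝ → ℝ) (N B : ℝ → EuclideanSpace ℝ (Fin 3))
    (hk : ∀ t, k t = ‖deriv (deriv ξ) t‖)
    (hkpos : ∀ t, 0 < k t)
    (hN : ∀ t, N t = (k t)⁻¹ • deriv (deriv ξ) t)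
    (hB : ∀ t, B t = cross3 (deriv ξ t) (N t))
    (hτ : ∀ t, τ t = det3 (deriv ξ t) (deriv (deriv ξ) t) (deriv (deriv (deriv ξ)) t) / (k t) ^ 2)
    (hτne : ∀ t, τ t ≠ 0)
    (hr : ∀ t, r t = (k t)⁻¹)
    (t : ℝ) (hW : deriv k t * τ t - k t * deriv τ t ≠ 0)
    (E : EuclideanSpace ℝ (Fin 3))
    (hE : E = ξ t + (k t / (deriv k t * τ t - k t * deriv τ t)) •
        (τ t • deriv ξ t + k t • B t)) :
    (∀ P : EuclideanSpace ℝ (Fin 3),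
      (⟪P - ξ t, N t⟫ = 0 ∧
        ⟪P - ξ t, (-(k t)) • deriv ξ t + τ t • B t⟫ = 0 ∧
        k t + ⟪P - ξ t,
          (-(deriv k t)) • deriv ξ t + deriv τ t • B t - (k t ^ 2 + τ t ^ 2) • N t⟫ = 0)
      ↔ P = E) ∧
    ⟪E - ξ t, deriv ξ t⟫ = k t * τ t / (deriv k t * τ t - k t * deriv τ t) ∧
    ⟪E - ξ t, B t⟫ = k t ^ 2 / (deriv k t * τ t - k t * deriv τ t) ∧
    ⟪E - ξ t, N t⟫ = 0 := by
  have hkne : k t ≠ 0 := ne_of_gt (hkpos t)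
  have hτt : τ t ≠ 0 := hτne t
  -- differentiability of the unit tangent
  have hdf : Differentiable ℝ (deriv ξ) := by
    have h2 : ContDiff ℝ ((1:ℕ) + 1) ξ := hξ.of_le (by exact WithTop.coe_le_coe.mpr le_top)
    exact ((contDiff_succ_iff_deriv.mp h2).2.2).differentiable (by norm_num)
  -- tangent orthogonal to acceleration
  have hTA : ⟪deriv ξ t, deriv (deriv ξ) t⟫ = 0 := perp3 (deriv ξ) hdf hunit t
  -- basic vector-level inner products
  have hiTT : ⟪deriv ξ t, deriv ξ t⟫ = 1 := by
    rw [real_inner_self_eq_norm_sq, hunit t]; norm_num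
  have hiTN : ⟪deriv ξ t, N t⟫ = 0 := by
    rw [hN t, real_inner_smul_right, hTA, mul_zero]
  have hiNN : ⟪N t, N t⟫ = 1 := by
    rw [hN t, real_inner_smul_left, real_inner_smul_right,
      real_inner_self_eq_norm_sq, ← hk t]
    field_simp
  -- component facts
  have hB0 : B t 0 = deriv ξ t 1 * N t 2 - deriv ξ t 2 * N t 1 := by
    rw [hB t]; simp [cross3]
  have hB1 : B t 1 = deriv ξ t 2 * N t 0 - deriv ξ t 0 * N t 2 := by
    rw [hB t]; simp [cross3]
  have hB2 : B t 2 = deriv ξ t 0 * N t 1 - deriv ξ t 1 * N t 0 := by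
    rw [hB t]; simp [cross3]
  have hTTc : deriv ξ t 0 ^2 + deriv ξ t 1 ^2 + deriv ξ t 2 ^2 = 1 := by
    have h := hiTT; rw [inner3_s11] at h; linear_combination h
  have hnnc : N t 0 ^2 + N t 1 ^2 + N t 2 ^2 = 1 := by
    have h := hiNN; rw [inner3_s11] at h; linear_combination h
  have hTnc : deriv ξ t 0 * N t 0 + deriv ξ t 1 * N t 1 + deriv ξ t 2 * N t 2 = 0 := by
    have h := hiTN; rw [inner3_s11] at h; linear_combination h
  have hiTB : ⟪deriv ξ t, B t⟫ = 0 := by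
    rw [inner3_s11, hB0, hB1, hB2]; ring
  have hiNB : ⟪N t, B t⟫ = 0 := by
    rw [inner3_s11, hB0, hB1, hB2]; ring
  have hiBB : ⟪B t, B t⟫ = 1 := by
    rw [inner3_s11, hB0, hB1, hB2]
    linear_combination (N t 0 ^2 + N t 1 ^2 + N t 2 ^2) * hTTc + hnnc
      - (deriv ξ t 0 * N t 0 + deriv ξ t 1 * N t 1 + deriv ξ t 2 * N t 2) * hTnc
  -- inner products of E - ξ t with the frame
  have hEsub : E - ξ t = (k t / (deriv k t * τ t - k t * deriv τ t)) •
      (τ t • deriv ξ t + k t • B t) := by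
    rw [hE, add_sub_cancel_left]
  have eT : ⟪E - ξ t, deriv ξ t⟫ = k t * τ t / (deriv k t * τ t - k t * deriv τ t) := by
    rw [hEsub, real_inner_smul_left, inner_add_left, real_inner_smul_left,
      real_inner_smul_left, hiTT, real_inner_comm (deriv ξ t) (B t), hiTB]
    field_simp; ring
  have eB : ⟪E - ξ t, B t⟫ = k t ^ 2 / (deriv k t * τ t - k t * deriv τ t) := by
    rw [hEsub, real_inner_smul_left, inner_add_left, real_inner_smul_left,
      real_inner_smul_left, hiTB, hiBB]
    field_simp; ring
  have eN : ⟪E - ξ t, N t⟫ = 0 := by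
    rw [hEsub, real_inner_smul_left, inner_add_left, real_inner_smul_left,
      real_inner_smul_left, hiTN, real_inner_comm (N t) (B t), hiNB]
    ring
  refine ⟨fun P => ⟨fun hq => ?_, fun hp => ?_⟩, eT, eB, eN⟩
  · -- uniqueness direction
    obtain ⟨q1, q2, q3⟩ := hq
    -- E also satisfies the three equations
    have E2 : ⟪E - ξ t, (-(k t)) • deriv ξ t + τ t • B t⟫ = 0 := by
      rw [inner_add_right, real_inner_smul_right, real_inner_smul_right, eT, eB]
      field_simp; ring
    have E3 : k t + ⟪E - ξ t,
        (-(deriv k t)) • deriv ξ t + deriv τ t • B t - (k t ^ 2 + τ t ^ 2) • N t⟫ = 0 := by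
      rw [inner_sub_right, inner_add_right, real_inner_smul_right,
        real_inner_smul_right, real_inner_smul_right, eT, eB, eN]
      field_simp; ring
    -- the difference D := P - E
    have hPE : P - E = (P - ξ t) - (E - ξ t) := by abel
    have z0 : ⟪P - E, N t⟫ = 0 := by
      rw [hPE, inner_sub_left, q1, eN]; ring
    have ha : ⟪P - E, (-(k t)) • deriv ξ t + τ t • B t⟫ = 0 := by
      rw [hPE, inner_sub_left, q2, E2]; ring
    have hb : ⟪P - E, (-(deriv k t)) • deriv ξ t + deriv τ t • B t
        - (k t ^ 2 + τ t ^ 2) • N t⟫ = 0 := by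
      rw [hPE, inner_sub_left]
      have := q3; have := E3; linarith
    rw [inner_add_right, real_inner_smul_right, real_inner_smul_right] at ha
    rw [inner_sub_right, inner_add_right, real_inner_smul_right,
      real_inner_smul_right, real_inner_smul_right, z0] at hb
    -- solve the linear system
    have hx : ⟪P - E, deriv ξ t⟫ = 0 := by
      have hc : (deriv k t * τ t - k t * deriv τ t) * ⟪P - E, deriv ξ t⟫ = 0 := by
        linear_combination (- (τ t)) * hb + deriv τ t * ha
      rcases mul_eq_zero.mp hc with h | h
      · exact absurd h hW
      · exact h
    have hy : ⟪P - E, B t⟫ = 0 := by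
      have hc : τ t * ⟪P - E, B t⟫ = 0 := by linear_combination ha + (k t) * hx
      rcases mul_eq_zero.mp hc with h | h
      · exact absurd h hτt
      · exact h
    -- convert to components
    rw [inner3_s11] at hx hy z0
    have hy' : (P - E) 0 * (deriv ξ t 1 * N t 2 - deriv ξ t 2 * N t 1)
        + (P - E) 1 * (deriv ξ t 2 * N t 0 - deriv ξ t 0 * N t 2)
        + (P - E) 2 * (deriv ξ t 0 * N t 1 - deriv ξ t 1 * N t 0) = 0 := by
      rw [← hB0, ← hB1, ← hB2]; exact hy
    have hx' : (P - E) 0 * deriv ξ t 0 + (P - E) 1 * deriv ξ t 1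
        + (P - E) 2 * deriv ξ t 2 = 0 := hx
    have hz' : (P - E) 0 * N t 0 + (P - E) 1 * N t 1 + (P - E) 2 * N t 2 = 0 := z0
    have hD0 := key3 (deriv ξ t 0) (deriv ξ t 1) (deriv ξ t 2) (N t 0) (N t 1) (N t 2)
      ((P - E) 0) ((P - E) 1) ((P - E) 2) hTTc hnnc hTnc
    have hD1 := key3 (deriv ξ t 1) (deriv ξ t 2) (deriv ξ t 0) (N t 1) (N t 2) (N t 0)
      ((P - E) 1) ((P - E) 2) ((P - E) 0) (by linarith) (by linarith) (by linarith)
    have hD2 := key3 (deriv ξ t 2) (deriv ξ t 0) (deriv ξ t 1) (N t 2) (N t 0) (N t 1)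
      ((P - E) 2) ((P - E) 0) ((P - E) 1) (by linarith) (by linarith) (by linarith)
    have hPeq : ∀ i : Fin 3, P i = E i := by
      have d0 : (P - E) 0 = 0 := by rw [hD0]; linear_combination (deriv ξ t 0) * hx' + (N t 0) * hz' + (deriv ξ t 1 * N t 2 - deriv ξ t 2 * N t 1) * hy'
      have d1 : (P - E) 1 = 0 := by rw [hD1]; linear_combination (deriv ξ t 1) * hx' + (N t 1) * hz' + (deriv ξ t 2 * N t 0 - deriv ξ t 0 * N t 2) * hy'
      have d2 : (P - E) 2 = 0 := by rw [hD2]; linear_combination (deriv ξ t 2) * hx' + (N t 2) * hz' + (deriv ξ t 0 * N t 1 - deriv ξ t 1 * N t 0) * hy'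
      intro i
      fin_cases i
      · simpa [sub_eq_zero] using d0
      · simpa [sub_eq_zero] using d1
      · simpa [sub_eq_zero] using d2
    ext i; exact hPeq i
  · -- existence direction
    subst hp
    refine ⟨eN, ?_, ?_⟩
    · rw [inner_add_right, real_inner_smul_right, real_inner_smul_right, eT, eB]
      field_simp; ring
    · rw [inner_sub_right, inner_add_right, real_inner_smul_right,
        real_inner_smul_right, real_inner_smul_right, eT, eB, eN]
      field_simp; ring
end
end
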